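/- arXiv:1711.10600 — 2 statements merged into one kernel-verified Lean document; each statement's English description precedes it below -/
import Mathlib

section
/- Let a, b, c be real numbers with c ≠ 0 and b ≠ a, let t = sign((b−a)/c) · |c| / ( |(b−a)/2| + √(c² + ((b−a)/2)²) ), cs = 1/√(1+t²), sn = t·cs, and let J be the 2×2 rotation matrix with rows (cs, sn) and (−sn, cs). Then Jᵀ · [[a, c], [c, b]] · J equals the diagonal matrix diag(a − c·t, b + c·t). -/
open Matrix

/-!
With `e = b - a`, `sign (e / c) * |c| = sign e * c`, so
`t = sign e * c / (|e / 2| + √(c² + (e / 2)²))`; for `e ≠ 0` this denominator is positive, and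
clearing it shows that `t` is a root of `c t² + e t - c = 0`. Given `cs² (1 + t²) = 1`, the
off-diagonal entries of `Jᵀ A J` are `-cs²` times this quadratic, and the same identity reduces the
diagonal entries to `a - c t` and `b + c t`.
-/

/-- The Jacobi parameter `t` of `[[a, c], [c, b]]`, written in terms of `e = b - a`. -/
noncomputable def jacobiParam (e c : ℝ) : ℝ :=
  Real.sign (e / c) * |c| / (|e / 2| + √(c ^ 2 + (e / 2) ^ 2))

theorem Real.sign_div_mul_abs (x y : ℝ) : Real.sign (x / y) * |y| = Real.sign x * y := by
  rcases lt_trichotomy x 0 with hx | rfl | hx <;> rcases lt_trichotomy y 0 with hy | rfl | hy <;>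
    simp [Real.sign_of_pos, Real.sign_of_neg, div_pos_of_neg_of_neg, div_neg_of_neg_of_pos,
      div_neg_of_pos_of_neg, abs_of_neg, abs_of_pos, *]

theorem jacobiParam_eq (e c : ℝ) :
    jacobiParam e c = Real.sign e * c / (|e / 2| + √(c ^ 2 + (e / 2) ^ 2)) := by
  rw [jacobiParam, Real.sign_div_mul_abs]

theorem jacobiParam_quadratic {e : ℝ} (he : e ≠ 0) (c : ℝ) :
    c * jacobiParam e c ^ 2 + e * jacobiParam e c - c = 0 := by
  rw [jacobiParam_eq]
  have hs₀ := Real.sqrt_nonneg (c ^ 2 + (e / 2) ^ 2)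
  have hs : √(c ^ 2 + (e / 2) ^ 2) ^ 2 = c ^ 2 + (e / 2) ^ 2 := Real.sq_sqrt (by positivity)
  generalize √(c ^ 2 + (e / 2) ^ 2) = s at hs₀ hs ⊢
  rcases he.lt_or_gt with he | he
  · have hden : -e + 2 * s ≠ 0 := by linarith
    rw [Real.sign_of_neg he, abs_of_neg (by linarith)]
    field_simp
    linear_combination (-4 * c) * hs
  · have hden : e + 2 * s ≠ 0 := by linarith
    rw [Real.sign_of_pos he, abs_of_pos (by linarith)]
    field_simp
    linear_combination (-4 * c) * hs

theorem transpose_rotation_mul_mul_rotation {R : Type*} [CommRing R] {a b c t cs : R}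
    (hroot : c * t ^ 2 + (b - a) * t - c = 0) (hcs : cs ^ 2 * (1 + t ^ 2) = 1) :
    (!![cs, t * cs; -(t * cs), cs])ᵀ * !![a, c; c, b] * !![cs, t * cs; -(t * cs), cs] =
      !![a - c * t, 0; 0, b + c * t] := by
  ext i j
  fin_cases i <;> fin_cases j <;>
    simp only [Fin.zero_eta, Fin.mk_one, Fin.isValue, Matrix.mul_apply, transpose_apply, of_apply,
      cons_val', cons_val_zero, cons_val_one, cons_val_fin_one, Fin.sum_univ_two]
  · linear_combination (a - c * t) * hcs + cs ^ 2 * t * hroot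
  · linear_combination (-cs ^ 2) * hroot
  · linear_combination (-cs ^ 2) * hroot
  · linear_combination (b + c * t) * hcs - cs ^ 2 * t * hroot

theorem one_div_sqrt_one_add_sq_sq_mul (t : ℝ) : (1 / √(1 + t ^ 2)) ^ 2 * (1 + t ^ 2) = 1 := by
  rw [div_pow, one_pow, Real.sq_sqrt (by positivity)]
  field_simp

theorem jacobi_rotation_diagonalizes_general (a b c : ℝ) (hba : b ≠ a)
    (t cs sn : ℝ)
    (ht : t = Real.sign ((b - a) / c) * |c| /
        (|(b - a) / 2| + Real.sqrt (c ^ 2 + ((b - a) / 2) ^ 2)))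
    (hcs : cs = 1 / Real.sqrt (1 + t ^ 2)) (hsn : sn = t * cs)
    (J : Matrix (Fin 2) (Fin 2) ℝ) (hJ : J = !![cs, sn; -sn, cs]) :
    Jᵀ * !![a, c; c, b] * J = !![a - c * t, 0; 0, b + c * t] := by
  have hroot : c * t ^ 2 + (b - a) * t - c = 0 :=
    ht ▸ jacobiParam_quadratic (sub_ne_zero.mpr hba) c
  have hcs₂ : cs ^ 2 * (1 + t ^ 2) = 1 := hcs ▸ one_div_sqrt_one_add_sq_sq_mul t
  subst hJ hsn
  exact transpose_rotation_mul_mul_rotation hroot hcs₂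

/-- Let `a`, `b`, `c` be real numbers with `c ≠ 0` and `b ≠ a`, let `t` be the Jacobi
rotation parameter, `cs = 1/√(1+t²)`, `sn = t·cs`, and let `J` be the 2×2 rotation
matrix with rows `(cs, sn)` and `(−sn, cs)`. Then `Jᵀ · [[a, c], [c, b]] · J` equals
the diagonal matrix `diag(a − c·t, b + c·t)`. -/
theorem jacobi_rotation_diagonalizes (a b c : ℝ) (hc : c ≠ 0) (hba : b ≠ a)
    (t cs sn : ℝ)
    (ht : t = Real.sign ((b - a) / c) * |c| /
        (|(b - a) / 2| + Real.sqrt (c ^ 2 + ((b - a) / 2) ^ 2)))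
    (hcs : cs = 1 / Real.sqrt (1 + t ^ 2)) (hsn : sn = t * cs)
    (J : Matrix (Fin 2) (Fin 2) ℝ) (hJ : J = !![cs, sn; -sn, cs]) :
    Jᵀ * !![a, c; c, b] * J = !![a - c * t, 0; 0, b + c * t] :=
  jacobi_rotation_diagonalizes_general a b c hba t cs sn ht hcs hsn J hJ
end

section
/- If A is an n×n real symmetric matrix and J is an n×n real orthogonal matrix, then every entry of the updated matrix B = JᵀAJ satisfies |B_{kl}| ≤ √(‖A‖₁ · ‖A‖∞), where the norms are those of the original matrix A. -/
open Matrix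

/-- Maximum absolute column sum: operator norm induced by the ℓ¹ vector norm. -/
noncomputable def colSumNorm {n : Type*} [Fintype n] (A : Matrix n n ℝ) : ℝ :=
  ⨆ j, ∑ i, |A i j|

/-- Maximum absolute row sum: operator norm induced by the ℓ∞ vector norm. -/
noncomputable def rowSumNorm {n : Type*} [Fintype n] (A : Matrix n n ℝ) : ℝ :=
  ⨆ i, ∑ j, |A i j|

/-- Spectral norm: operator norm induced by the Euclidean vector norm. -/
noncomputable def matSpectralNorm {n : Type*} [Fintype n] [DecidableEq n] (A : Matrix n n ℝ) : ℝ :=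
  ‖LinearMap.toContinuousLinearMap (Matrix.toEuclideanLin A)‖

/-!
Write `B k l = uᵀ A v` with `u`, `v` the (unit) columns `k`, `l` of `J`. Splitting each term as
`|u i A i j v j| = √(u i² |A i j|) · √(v j² |A i j|)`, Cauchy–Schwarz over all pairs `(i, j)` gives
`(uᵀ A v)² ≤ (∑ i, u i² ∑ j, |A i j|) (∑ j, v j² ∑ i, |A i j|)`, and the two factors are at most
`‖A‖∞ ∑ u i² = ‖A‖∞` and `‖A‖₁ ∑ v j² = ‖A‖₁`.
-/

open Finset

lemma sum_abs_le_colSumNorm {n : Type*} [Fintype n] (A : Matrix n n ℝ) (j : n) :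
    ∑ i, |A i j| ≤ colSumNorm A :=
  le_ciSup (f := fun j => ∑ i, |A i j|) (Set.finite_range _).bddAbove j

lemma sum_abs_le_rowSumNorm {n : Type*} [Fintype n] (A : Matrix n n ℝ) (i : n) :
    ∑ j, |A i j| ≤ rowSumNorm A :=
  le_ciSup (f := fun i => ∑ j, |A i j|) (Set.finite_range _).bddAbove i

lemma dotProduct_mulVec_eq_sum_prod {m n : Type*} [Fintype m] [Fintype n] (A : Matrix m n ℝ)
    (u : m → ℝ) (v : n → ℝ) :
    u ⬝ᵥ A *ᵥ v = ∑ p : m × n, u p.1 * A p.1 p.2 * v p.2 := by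
  simp only [dotProduct, mulVec, Fintype.sum_prod_type, mul_sum, mul_assoc]

lemma sq_dotProduct_mulVec_le {m n : Type*} [Fintype m] [Fintype n] (A : Matrix m n ℝ)
    (u : m → ℝ) (v : n → ℝ) :
    (u ⬝ᵥ A *ᵥ v) ^ 2 ≤ (∑ i, u i ^ 2 * ∑ j, |A i j|) * ∑ j, v j ^ 2 * ∑ i, |A i j| := by
  have hrow : ∑ p : m × n, u p.1 ^ 2 * |A p.1 p.2| = ∑ i, u i ^ 2 * ∑ j, |A i j| := by
    simp only [Fintype.sum_prod_type, mul_sum]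
  have hcol : ∑ p : m × n, v p.2 ^ 2 * |A p.1 p.2| = ∑ j, v j ^ 2 * ∑ i, |A i j| := by
    simp only [Fintype.sum_prod_type_right, mul_sum]
  rw [← hrow, ← hcol, ← sq_abs, dotProduct_mulVec_eq_sum_prod]
  calc |∑ p : m × n, u p.1 * A p.1 p.2 * v p.2| ^ 2
      ≤ (∑ p : m × n, |u p.1 * A p.1 p.2 * v p.2|) ^ 2 := by
        gcongr
        exact abs_sum_le_sum_abs _ _
    _ ≤ _ := by
        refine sum_sq_le_sum_mul_sum_of_sq_le_mul _ (fun _ _ => by positivity)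
          (fun _ _ => by positivity) fun p _ => le_of_eq ?_
        rw [sq_abs]
        linear_combination (-(u p.1 ^ 2 * v p.2 ^ 2)) * abs_mul_abs_self (A p.1 p.2)

lemma abs_dotProduct_mulVec_le_sqrt_colSumNorm_mul_rowSumNorm {n : Type*} [Fintype n]
    (A : Matrix n n ℝ) {u v : n → ℝ} (hu : ∑ i, u i ^ 2 = 1) (hv : ∑ j, v j ^ 2 = 1) :
    |u ⬝ᵥ A *ᵥ v| ≤ Real.sqrt (colSumNorm A * rowSumNorm A) := by
  have hrow : ∑ i, u i ^ 2 * ∑ j, |A i j| ≤ rowSumNorm A :=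
    calc ∑ i, u i ^ 2 * ∑ j, |A i j| ≤ ∑ i, u i ^ 2 * rowSumNorm A := by
          gcongr with i
          exact sum_abs_le_rowSumNorm A i
      _ = rowSumNorm A := by rw [← sum_mul, hu, one_mul]
  have hcol : ∑ j, v j ^ 2 * ∑ i, |A i j| ≤ colSumNorm A :=
    calc ∑ j, v j ^ 2 * ∑ i, |A i j| ≤ ∑ j, v j ^ 2 * colSumNorm A := by
          gcongr with j
          exact sum_abs_le_colSumNorm A j
      _ = colSumNorm A := by rw [← sum_mul, hv, one_mul]
  rw [← Real.sqrt_sq_eq_abs]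
  gcongr
  calc (u ⬝ᵥ A *ᵥ v) ^ 2
      ≤ (∑ i, u i ^ 2 * ∑ j, |A i j|) * ∑ j, v j ^ 2 * ∑ i, |A i j| := sq_dotProduct_mulVec_le A u v
    _ ≤ rowSumNorm A * colSumNorm A :=
        mul_le_mul hrow hcol (sum_nonneg fun j _ => by positivity)
          ((sum_nonneg fun i _ => by positivity).trans hrow)
    _ = colSumNorm A * rowSumNorm A := mul_comm _ _

lemma transpose_mul_mul_apply {m n : Type*} [Fintype m] (A : Matrix m m ℝ) (J : Matrix m n ℝ)
    (k l : n) : (Jᵀ * A * J) k l = (fun i => J i k) ⬝ᵥ A *ᵥ fun j => J j l := by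
  simp only [mul_apply, dotProduct, mulVec, transpose_apply, sum_mul, mul_sum, mul_assoc]
  exact sum_comm

lemma sum_sq_apply_eq_one_of_transpose_mul_self_eq_one {m n : Type*} [Fintype m] [DecidableEq n]
    {J : Matrix m n ℝ} (hJ : Jᵀ * J = 1) (k : n) : ∑ i, J i k ^ 2 = 1 := by
  simpa [mul_apply, sq] using congrFun (congrFun hJ k) k

theorem abs_entry_conjugated_le_sqrt_colSumNorm_mul_rowSumNorm_general
    {n : Type*} [Fintype n] [DecidableEq n] (A J : Matrix n n ℝ)
    (hJ : Jᵀ * J = 1) (B : Matrix n n ℝ) (hB : B = Jᵀ * A * J) (k l : n) :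
    |B k l| ≤ Real.sqrt (colSumNorm A * rowSumNorm A) := by
  rw [hB, transpose_mul_mul_apply]
  exact abs_dotProduct_mulVec_le_sqrt_colSumNorm_mul_rowSumNorm A
    (sum_sq_apply_eq_one_of_transpose_mul_self_eq_one hJ k)
    (sum_sq_apply_eq_one_of_transpose_mul_self_eq_one hJ l)

/-- If `A` is an n×n real symmetric matrix and `J` is an n×n real orthogonal matrix,
then every entry of the updated matrix `B = JᵀAJ` satisfies
`|B k l| ≤ √(‖A‖₁ · ‖A‖∞)`, where the norms are those of the original matrix `A`. -/
theorem abs_entry_conjugated_le_sqrt_colSumNorm_mul_rowSumNorm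
    {n : Type*} [Fintype n] [DecidableEq n] (A J : Matrix n n ℝ) (hA : A.IsSymm)
    (hJ : Jᵀ * J = 1) (B : Matrix n n ℝ) (hB : B = Jᵀ * A * J) (k l : n) :
    |B k l| ≤ Real.sqrt (colSumNorm A * rowSumNorm A) :=
  abs_entry_conjugated_le_sqrt_colSumNorm_mul_rowSumNorm_general A J hJ B hB k l
end
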